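/- arXiv:1011.3317 — 5 statements merged into one kernel-verified Lean document; each statement's English description precedes it below -/
import Mathlib

section
/- Let n ≥ 1. For every ω = [[p, q],[conj(q), conj(p)]] ∈ Sp(n,ℝ)_* and every W ∈ 𝔇_n, the matrix conj(q)·W + conj(p) is invertible and ω·W := (p·W + q)·(conj(q)·W + conj(p))^{-1} lies in 𝔇_n; moreover this defines a group action: I_{2n}·W = W and (ω·ω')·W = ω·(ω'·W) for all ω, ω' ∈ Sp(n,ℝ)_* and W ∈ 𝔇_n. -/
open Matrix
open scoped ComplexOrder

/-- Entrywise complex conjugate of a matrix. -/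
def cm {n : ℕ} (W : Matrix (Fin n) (Fin n) ℂ) : Matrix (Fin n) (Fin n) ℂ :=
  W.map (starRingEnd ℂ)

/-- The Siegel disk `𝔇_n`: symmetric complex matrices with `1 - W ⬝ conj W` positive definite. -/
def SiegelDisk (n : ℕ) : Set (Matrix (Fin n) (Fin n) ℂ) :=
  {W | W.IsSymm ∧ (1 - W * cm W).PosDef}

/-- The defining relations of `Sp(n,ℝ)_*` for the blocks `p`, `q` of
`ω = [[p, q],[conj q, conj p]]`. -/
def SpStarRel {n : ℕ} (p q : Matrix (Fin n) (Fin n) ℂ) : Prop :=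
  pᵀ * cm p - (cm q)ᵀ * q = 1 ∧ pᵀ * cm q = (cm q)ᵀ * p

/-- The action `ω·W = (p W + q)(conj q W + conj p)⁻¹` of `Sp(n,ℝ)_*` on the Siegel disk. -/
noncomputable def diskAct {n : ℕ} (p q W : Matrix (Fin n) (Fin n) ℂ) :
    Matrix (Fin n) (Fin n) ℂ :=
  (p * W + q) * (cm q * W + cm p)⁻¹

/-!
The relations defining `Sp(n,ℝ)_*` say that `ω` preserves both the hermitian form
`|y|² - |x|²` and the bilinear symplectic form on `ℂⁿ ⊕ ℂⁿ`. Applying `ω` to the graph `(W; 1)`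
of `W` gives `(N; M)` with `N = pW + q`, `M = conj q W + conj p`, hence
`MᴴM - NᴴN = 1 - WᴴW`, positive definite, and `NᵀM = MᵀN`. The first identity makes `M`
invertible and, after congruence by `M⁻¹`, shows `1 - W'ᴴW'` positive definite for
`W' = N M⁻¹`; the second makes `W'` symmetric. The action law is the composition rule of
linear fractional maps.
-/

section Conj

variable {n : ℕ}

@[simp] lemma cm_mul (A B : Matrix (Fin n) (Fin n) ℂ) : cm (A * B) = cm A * cm B :=
  Matrix.map_mul

@[simp] lemma cm_add (A B : Matrix (Fin n) (Fin n) ℂ) : cm (A + B) = cm A + cm B :=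
  Matrix.map_add _ (map_add _) A B

@[simp] lemma cm_sub (A B : Matrix (Fin n) (Fin n) ℂ) : cm (A - B) = cm A - cm B :=
  Matrix.map_sub _ (map_sub _) A B

@[simp] lemma cm_one : cm (1 : Matrix (Fin n) (Fin n) ℂ) = 1 :=
  Matrix.map_one _ (map_zero _) (map_one _)

@[simp] lemma cm_zero : cm (0 : Matrix (Fin n) (Fin n) ℂ) = 0 :=
  Matrix.map_zero _ (map_zero _)

@[simp] lemma cm_transpose (A : Matrix (Fin n) (Fin n) ℂ) : cm Aᵀ = (cm A)ᵀ :=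
  transpose_map

@[simp] lemma cm_cm (A : Matrix (Fin n) (Fin n) ℂ) : cm (cm A) = A := by
  ext; simp [cm]

lemma transpose_cm (A : Matrix (Fin n) (Fin n) ℂ) : (cm A)ᵀ = Aᴴ := rfl

lemma Matrix.IsSymm.conjTranspose_eq_cm {W : Matrix (Fin n) (Fin n) ℂ} (hW : W.IsSymm) :
    Wᴴ = cm W := by
  rw [← transpose_cm, ← cm_transpose, hW.eq]

end Conj

lemma mem_siegelDisk_iff {n : ℕ} {W : Matrix (Fin n) (Fin n) ℂ} :
    W ∈ SiegelDisk n ↔ W.IsSymm ∧ (1 - Wᴴ * W).PosDef := by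
  refine and_congr_right fun hW => ?_
  rw [← PosDef.transpose_iff, transpose_sub, transpose_one, transpose_mul, transpose_cm,
    hW.eq, hW.conjTranspose_eq_cm]

section Inverse

variable {ι R : Type*} [Fintype ι] [DecidableEq ι] [CommRing R]

lemma mul_add_nonsing_inv_mul_add_inv {Y : Matrix ι ι R} (hY : IsUnit Y)
    (A B C D X : Matrix ι ι R) :
    (A * (X * Y⁻¹) + B) * (C * (X * Y⁻¹) + D)⁻¹ = (A * X + B * Y) * (C * X + D * Y)⁻¹ := by
  have hdet := (isUnit_iff_isUnit_det Y).mp hY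
  have hfrac (E F : Matrix ι ι R) : E * (X * Y⁻¹) + F = (E * X + F * Y) * Y⁻¹ := by
    rw [add_mul, mul_assoc, mul_assoc, mul_nonsing_inv _ hdet, mul_one]
  rw [hfrac, hfrac, Matrix.mul_inv_rev, nonsing_inv_nonsing_inv _ hdet, mul_assoc,
    ← mul_assoc Y⁻¹, nonsing_inv_mul _ hdet, one_mul]

lemma isSymm_mul_nonsing_inv {M N : Matrix ι ι R} (hM : IsUnit M) (h : Nᵀ * M = Mᵀ * N) :
    (N * M⁻¹).IsSymm := by
  have hdet := (isUnit_iff_isUnit_det M).mp hM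
  have hdetT : IsUnit Mᵀ.det := by rwa [det_transpose]
  calc (N * M⁻¹)ᵀ = (Mᵀ)⁻¹ * (Nᵀ * M) * M⁻¹ := by
        rw [transpose_mul, transpose_nonsing_inv, mul_assoc, mul_assoc, mul_nonsing_inv _ hdet,
          mul_one]
    _ = N * M⁻¹ := by rw [h, ← mul_assoc, nonsing_inv_mul _ hdetT, one_mul]

lemma one_sub_conjTranspose_mul_self_mul_nonsing_inv [StarRing R] {M N : Matrix ι ι R}
    (hM : IsUnit M) :
    1 - (N * M⁻¹)ᴴ * (N * M⁻¹) = (M⁻¹)ᴴ * (Mᴴ * M - Nᴴ * N) * M⁻¹ := by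
  have hdet := (isUnit_iff_isUnit_det M).mp hM
  have hleft : (M⁻¹)ᴴ * Mᴴ = 1 := by
    rw [← conjTranspose_mul, mul_nonsing_inv _ hdet, conjTranspose_one]
  calc 1 - (N * M⁻¹)ᴴ * (N * M⁻¹)
      = (M⁻¹)ᴴ * Mᴴ * (M * M⁻¹) - (M⁻¹)ᴴ * (Nᴴ * N) * M⁻¹ := by
        rw [hleft, mul_nonsing_inv _ hdet, conjTranspose_mul]; noncomm_ring
    _ = (M⁻¹)ᴴ * (Mᴴ * M - Nᴴ * N) * M⁻¹ := by noncomm_ring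

end Inverse

namespace SpStarRel

variable {n : ℕ} {p q : Matrix (Fin n) (Fin n) ℂ}

lemma conj (h : SpStarRel p q) : (cm p)ᵀ * p - qᵀ * cm q = 1 ∧ (cm p)ᵀ * q = qᵀ * cm p := by
  obtain ⟨h₁, h₂⟩ := h
  constructor
  · simpa only [cm_sub, cm_mul, cm_transpose, cm_cm, cm_one] using congrArg cm h₁
  · simpa only [cm_mul, cm_transpose, cm_cm] using congrArg cm h₂

lemma denom_conjTranspose_mul_self_sub (h : SpStarRel p q) (W : Matrix (Fin n) (Fin n) ℂ) :
    (cm q * W + cm p)ᴴ * (cm q * W + cm p) - (p * W + q)ᴴ * (p * W + q) = 1 - Wᴴ * W := by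
  obtain ⟨h₁', h₂'⟩ := h.conj
  obtain ⟨h₁, h₂⟩ := h
  simp only [conjTranspose_add, conjTranspose_mul, ← transpose_cm, cm_cm]
  linear_combination (norm := noncomm_ring) h₁ - (cm W)ᵀ * h₁' * W - (cm W)ᵀ * h₂' + h₂ * W

lemma transpose_mul_denom_comm (h : SpStarRel p q) {W : Matrix (Fin n) (Fin n) ℂ}
    (hW : W.IsSymm) :
    (p * W + q)ᵀ * (cm q * W + cm p) = (cm q * W + cm p)ᵀ * (p * W + q) := by
  obtain ⟨h₁', h₂'⟩ := h.conj
  obtain ⟨h₁, h₂⟩ := h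
  simp only [transpose_add, transpose_mul, hW.eq]
  linear_combination (norm := noncomm_ring) W * h₂ * W + W * h₁ - h₁' * W - h₂'

lemma isUnit_denom (h : SpStarRel p q) {W : Matrix (Fin n) (Fin n) ℂ}
    (hW : (1 - Wᴴ * W).PosDef) : IsUnit (cm q * W + cm p) := by
  have hpos : ((cm q * W + cm p)ᴴ * (cm q * W + cm p)).PosDef := by
    rw [← sub_add_cancel (_ᴴ * _) ((p * W + q)ᴴ * (p * W + q)),
      h.denom_conjTranspose_mul_self_sub, add_comm]
    exact hW.posSemidef_add (posSemidef_conjTranspose_mul_self _)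
  exact isUnit_of_mul_isUnit_right hpos.isUnit

lemma diskAct_mem (h : SpStarRel p q) {W : Matrix (Fin n) (Fin n) ℂ} (hW : W ∈ SiegelDisk n) :
    diskAct p q W ∈ SiegelDisk n := by
  rw [mem_siegelDisk_iff] at hW ⊢
  obtain ⟨hsymm, hpos⟩ := hW
  have hM := h.isUnit_denom hpos
  refine ⟨isSymm_mul_nonsing_inv hM (h.transpose_mul_denom_comm hsymm), ?_⟩
  rw [diskAct, one_sub_conjTranspose_mul_self_mul_nonsing_inv hM,
    h.denom_conjTranspose_mul_self_sub]
  exact hpos.conjTranspose_mul_mul_same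
    (mulVec_injective_of_isUnit (isUnit_nonsing_inv_iff.mpr hM))

end SpStarRel

@[simp] lemma diskAct_one_zero {n : ℕ} (W : Matrix (Fin n) (Fin n) ℂ) : diskAct 1 0 W = W := by
  simp [diskAct]

lemma diskAct_diskAct {n : ℕ} {p q p' q' W : Matrix (Fin n) (Fin n) ℂ}
    (hW : IsUnit (cm q' * W + cm p')) :
    diskAct p q (diskAct p' q' W) = diskAct (p * p' + q * cm q') (p * q' + q * cm p') W := by
  rw [diskAct, diskAct, mul_add_nonsing_inv_mul_add_inv hW, diskAct]
  simp only [cm_add, cm_mul, cm_cm]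
  congr 1
  · noncomm_ring
  · congr 1; noncomm_ring

theorem stmt0_general (n : ℕ) :
    (∀ p q : Matrix (Fin n) (Fin n) ℂ, SpStarRel p q → ∀ W ∈ SiegelDisk n,
        IsUnit (cm q * W + cm p) ∧ diskAct p q W ∈ SiegelDisk n)
    ∧ (∀ W ∈ SiegelDisk n, diskAct (1 : Matrix (Fin n) (Fin n) ℂ) 0 W = W)
    ∧ (∀ p q p' q' : Matrix (Fin n) (Fin n) ℂ, SpStarRel p q → SpStarRel p' q' →
        ∀ W ∈ SiegelDisk n,
          diskAct (p * p' + q * cm q') (p * q' + q * cm p') W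
            = diskAct p q (diskAct p' q' W)) := by
  refine ⟨fun p q h W hW => ⟨h.isUnit_denom (mem_siegelDisk_iff.mp hW).2, h.diskAct_mem hW⟩,
    fun W _ => diskAct_one_zero W, fun p q p' q' _ h' W hW => ?_⟩
  exact (diskAct_diskAct (h'.isUnit_denom (mem_siegelDisk_iff.mp hW).2)).symm

theorem stmt0 (n : ℕ) (hn : 1 ≤ n) :
    (∀ p q : Matrix (Fin n) (Fin n) ℂ, SpStarRel p q → ∀ W ∈ SiegelDisk n,
        IsUnit (cm q * W + cm p) ∧ diskAct p q W ∈ SiegelDisk n)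
    ∧ (∀ W ∈ SiegelDisk n, diskAct (1 : Matrix (Fin n) (Fin n) ℂ) 0 W = W)
    ∧ (∀ p q p' q' : Matrix (Fin n) (Fin n) ℂ, SpStarRel p q → SpStarRel p' q' →
        ∀ W ∈ SiegelDisk n,
          diskAct (p * p' + q * cm q') (p * q' + q * cm p') W
            = diskAct p q (diskAct p' q' W)) :=
  stmt0_general n
end

section
/- Let W ∈ 𝔇_n and Ω = i(I_n + W)(I_n − W)^{-1}. Then Im Ω = (I_n − W)^{-1}·(I_n − W·conj(W))·(I_n − conj(W))^{-1}. -/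
open Matrix
open scoped ComplexOrder

/-!
Write `X = (I - W)⁻¹` and `Y = (I - conj W)⁻¹`. Since `I + W = 2I - (I - W)`, the Cayley transform is
`(I + W)(I - W)⁻¹ = 2X - I`, so `Im Ω = ((I + W)(I - W)⁻¹ + conj((I + W)(I - W)⁻¹)) / 2 = X + Y - I`.
On the other side, `I - W conj W = (I - W) + (I - conj W) - (I - W)(I - conj W)`, whence
`X (I - W conj W) Y = Y + X - I`. The only analytic input is that `I - W` and `I - conj W` are invertible:
for symmetric `W` one has `conj W = Wᴴ`, and a nonzero `v` with `Wᴴ v = v` would give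
`vᴴ (I - W Wᴴ) v = 0`.
-/

namespace Matrix

section PosDef

variable {𝕜 ι : Type*} [RCLike 𝕜] [Fintype ι] [DecidableEq ι]

theorem isUnit_det_one_sub_conjTranspose_of_posDef {A : Matrix ι ι 𝕜}
    (hA : (1 - A * Aᴴ).PosDef) : IsUnit (1 - Aᴴ).det := by
  by_contra hdet
  obtain ⟨v, hv0, hv⟩ := exists_mulVec_eq_zero_iff.2 (by simpa [isUnit_iff_ne_zero] using hdet)
  rw [sub_mulVec, one_mulVec, sub_eq_zero] at hv
  have hvA : star v ᵥ* A = star v := by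
    rw [← conjTranspose_conjTranspose A, ← star_mulVec, ← hv]
  have hzero : star v ⬝ᵥ ((1 - A * Aᴴ) *ᵥ v) = 0 := by
    rw [sub_mulVec, one_mulVec, dotProduct_sub, ← mulVec_mulVec, ← hv, dotProduct_mulVec, hvA,
      sub_self]
  exact (hA.dotProduct_mulVec_pos hv0).ne' hzero

theorem isUnit_det_one_sub_of_posDef {A : Matrix ι ι 𝕜} (hA : (1 - A * Aᴴ).PosDef) :
    IsUnit (1 - A).det := by
  have h := isUnit_det_one_sub_conjTranspose_of_posDef hA
  rwa [← conjTranspose_one, ← conjTranspose_sub, det_conjTranspose, isUnit_star] at h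

end PosDef

section Cayley

variable {ι R : Type*} [Fintype ι] [DecidableEq ι] [CommRing R] {A B : Matrix ι ι R}

theorem one_add_mul_inv_one_sub (hA : IsUnit (1 - A).det) :
    (1 + A) * (1 - A)⁻¹ = (2 : R) • (1 - A)⁻¹ - 1 := by
  have h : 1 + A = (2 : R) • 1 - (1 - A) := by
    rw [two_smul]
    abel
  rw [h, sub_mul, smul_mul_assoc, one_mul, mul_nonsing_inv _ hA]

theorem inv_one_sub_mul_one_sub_mul_mul_inv_one_sub (hA : IsUnit (1 - A).det)
    (hB : IsUnit (1 - B).det) :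
    (1 - A)⁻¹ * (1 - A * B) * (1 - B)⁻¹ = (1 - A)⁻¹ + (1 - B)⁻¹ - 1 := by
  have h : 1 - A * B = (1 - A) + (1 - B) - (1 - A) * (1 - B) := by
    noncomm_ring
  rw [h, Matrix.mul_sub, Matrix.mul_add, nonsing_inv_mul _ hA, nonsing_inv_mul_cancel_left _ _ hA,
    Matrix.sub_mul, Matrix.add_mul, Matrix.one_mul, mul_nonsing_inv _ hB,
    mul_nonsing_inv_cancel_right _ _ hB]
  abel

end Cayley

end Matrix

section Conj

variable {n : ℕ}

theorem cm_eq_conjTranspose_transpose (A : Matrix (Fin n) (Fin n) ℂ) : cm A = Aᴴᵀ := rfl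

theorem cm_eq_conjTranspose_of_isSymm {W : Matrix (Fin n) (Fin n) ℂ} (hW : W.IsSymm) :
    cm W = Wᴴ :=
  hW.conjTranspose.eq

theorem cm_smul_cayley (A : Matrix (Fin n) (Fin n) ℂ) :
    cm (Complex.I • ((1 + A) * (1 - A)⁻¹)) = -(Complex.I • ((1 + cm A) * (1 - cm A)⁻¹)) := by
  simp only [cm_eq_conjTranspose_transpose, conjTranspose_smul, conjTranspose_mul,
    conjTranspose_nonsing_inv, conjTranspose_add, conjTranspose_sub, conjTranspose_one,
    transpose_smul, transpose_mul, transpose_nonsing_inv, transpose_add, transpose_sub,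
    transpose_one, transpose_neg, RCLike.star_def, Complex.conj_I, neg_smul]

end Conj

/-- For `W ∈ 𝔇_n` and `Ω = i(I+W)(I−W)⁻¹`, one has
`Im Ω = (Ω − conj Ω)/(2i) = (I−W)⁻¹ (I − W conj W) (I − conj W)⁻¹`. -/
theorem stmt6 (n : ℕ) (W : Matrix (Fin n) (Fin n) ℂ) (hW : W ∈ SiegelDisk n) :
    (2 * Complex.I)⁻¹ •
        (Complex.I • ((1 + W) * (1 - W)⁻¹) - cm (Complex.I • ((1 + W) * (1 - W)⁻¹)))
      = (1 - W)⁻¹ * (1 - W * cm W) * (1 - cm W)⁻¹ := by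
  obtain ⟨hsymm, hpos⟩ := hW
  have hcm := cm_eq_conjTranspose_of_isSymm hsymm
  rw [hcm] at hpos
  have hA : IsUnit (1 - W).det := isUnit_det_one_sub_of_posDef hpos
  have hB : IsUnit (1 - cm W).det := hcm ▸ isUnit_det_one_sub_conjTranspose_of_posDef hpos
  have hscalar : (2 * Complex.I)⁻¹ * Complex.I = 2⁻¹ := by field_simp
  rw [cm_smul_cayley, sub_neg_eq_add, ← smul_add, smul_smul, hscalar, one_add_mul_inv_one_sub hA,
    one_add_mul_inv_one_sub hB, inv_one_sub_mul_one_sub_mul_mul_inv_one_sub hA hB]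
  module
end

section
/- For all row vectors U, Z ∈ ℂⁿ and every symmetric W ∈ M_n(ℂ), exp(U·ᵗZ + ½·U·W·ᵗU) = ∑_{s∈ℕⁿ} (U^s/s!)·P_s(Z,W), where P_s(Z,W) = ∑_{a ∈ A_n, ã ≤ s} (s!/(2^{â}·a!·(s−ã)!))·Z^{s−ã}·W^a; here A_n is the set of symmetric n×n matrices a = (a_{ij}) with entries in ℕ, W^a = ∏_{1≤i≤j≤n} W_{ij}^{a_{ij}}, a! = ∏_{1≤i≤j≤n} a_{ij}!, â = ∑_{i=1}^n a_{ii}, ã ∈ ℕⁿ is defined by ã_k = a_{kk} + ∑_{i=1}^n a_{ik}, ã ≤ s means ã_k ≤ s_k for all k, and for r ∈ ℕⁿ, Z^r = ∏_i Z_i^{r_i}, r! = ∏_i r_i!. The series converges absolutely for all U. -/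
open Matrix
open scoped Nat

/-- `ã ∈ ℕⁿ`, `ã_k = a_{kk} + ∑_i a_{ik}`. -/
def tildeV {n : ℕ} (a : Matrix (Fin n) (Fin n) ℕ) : Fin n → ℕ :=
  fun k => a k k + ∑ i, a i k

/-- `â = ∑_i a_{ii}`. -/
def hatV {n : ℕ} (a : Matrix (Fin n) (Fin n) ℕ) : ℕ := ∑ i, a i i

/-- `a! = ∏_{i≤j} a_{ij}!`. -/
def aFact {n : ℕ} (a : Matrix (Fin n) (Fin n) ℕ) : ℕ :=
  ∏ i, ∏ j, if i ≤ j then (a i j)! else 1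

/-- `W^a = ∏_{i≤j} W_{ij}^{a_{ij}}`. -/
def mPow {n : ℕ} (W : Matrix (Fin n) (Fin n) ℂ) (a : Matrix (Fin n) (Fin n) ℕ) : ℂ :=
  ∏ i, ∏ j, if i ≤ j then W i j ^ a i j else 1

/-- `Z^r = ∏_i Z_i^{r_i}`. -/
def vPow {n : ℕ} (Z : Fin n → ℂ) (r : Fin n → ℕ) : ℂ := ∏ i, Z i ^ r i

/-- `r! = ∏_i r_i!`. -/
def vFact {n : ℕ} (r : Fin n → ℕ) : ℕ := ∏ i, (r i)!

/-- The polynomial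
`P_s(Z,W) = ∑_{a ∈ A_n, ã ≤ s} s!/(2^â a! (s−ã)!) · Z^{s−ã} · W^a`,
where `A_n` is the set of symmetric `n×n` matrices over `ℕ`. -/
noncomputable def Ppoly {n : ℕ} (s : Fin n → ℕ) (Z : Fin n → ℂ)
    (W : Matrix (Fin n) (Fin n) ℂ) : ℂ :=
  ∑' a : Matrix (Fin n) (Fin n) ℕ,
    if a.IsSymm ∧ ∀ k, tildeV a k ≤ s k then
      (vFact s : ℂ) /
          ((2 ^ hatV a : ℂ) * (aFact a : ℂ) * (vFact (fun k => s k - tildeV a k) : ℂ))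
        * vPow Z (fun k => s k - tildeV a k) * mPow W a
    else 0

/-!
For symmetric `W` the exponent is a sum of monomials,
`U ᵗZ + ½ U W ᵗU = ∑ᵢ UᵢZᵢ + ∑_{i ≤ j} c_{ij} W_{ij} UᵢUⱼ` with `c_{ii} = ½` and `c_{ij} = 1` for
`i < j`. Multiplying the absolutely convergent exponential series of the monomials gives a sum over
exponents `(r, b) ∈ ℕⁿ × ℕ^{i ≤ j}`, whose `(r, b)` term is `U^{r + ã} Z^r W^a / (2^â a! r!)`, where
`a` is the symmetric matrix with upper triangle `b`. The map `(r, b) ↦ (r + ã, a)` is injective and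
its image is the support of the summands of `(U^s / s!) P_s(Z, W)`, indexed by `(s, a)`; absolute
convergence then allows summing over `a` first.
-/

section ProdPi

variable {κ R : Type*} [NormedCommRing R] [CompleteSpace R]

theorem hasSum_prod_fin_and_summable_norm {m : ℕ} {f : Fin m → κ → R} {a : Fin m → R}
    (hf : ∀ i, HasSum (f i) (a i)) (hnorm : ∀ i, Summable fun k => ‖f i k‖) :
    HasSum (fun g : Fin m → κ => ∏ i, f i (g i)) (∏ i, a i) ∧
      Summable fun g : Fin m → κ => ‖∏ i, f i (g i)‖ := by
  induction m with
  | zero => exact ⟨by simp [hasSum_unique], (hasSum_unique _).summable⟩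
  | succ m ih =>
    obtain ⟨hsum, hsummable⟩ := ih (fun i => hf i.succ) (fun i => hnorm i.succ)
    have hprod := (hnorm 0).mul_norm hsummable
    have hmul := (hf 0).mul hsum hprod.of_norm
    let E := Fin.consEquiv fun _ : Fin (m + 1) => κ
    have hE : ∀ q, ∏ i, f i (E q i) = f 0 q.1 * ∏ i : Fin m, f i.succ (q.2 i) := fun q => by
      simp [E, Fin.consEquiv, Fin.prod_univ_succ]
    rw [← Fin.prod_univ_succ] at hmul
    simp only [← hE] at hmul hprod
    exact ⟨E.hasSum_iff.1 hmul, E.summable_iff.1 hprod⟩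

theorem hasSum_prod_pi_and_summable_norm {ι : Type*} [Fintype ι] {f : ι → κ → R} {a : ι → R}
    (hf : ∀ i, HasSum (f i) (a i)) (hnorm : ∀ i, Summable fun k => ‖f i k‖) :
    HasSum (fun g : ι → κ => ∏ i, f i (g i)) (∏ i, a i) ∧
      Summable fun g : ι → κ => ‖∏ i, f i (g i)‖ := by
  let e := (Fintype.equivFin ι).symm
  obtain ⟨hsum, hsummable⟩ :=
    hasSum_prod_fin_and_summable_norm (fun i => hf (e i)) (fun i => hnorm (e i))
  let E : (Fin (Fintype.card ι) → κ) ≃ (ι → κ) := e.arrowCongr (Equiv.refl κ)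
  have hE : ∀ g, ∏ i, f (e i) (g i) = ∏ i, f i (E g i) := fun g => by
    rw [← e.prod_comp]; simp [E]
  rw [e.prod_comp] at hsum
  simp only [hE] at hsum hsummable
  exact ⟨E.hasSum_iff.1 hsum, E.summable_iff.1 hsummable⟩

end ProdPi

theorem Complex.hasSum_prod_pow_div_factorial {ι : Type*} [Fintype ι] (x : ι → ℂ) :
    HasSum (fun g : ι → ℕ => ∏ i, x i ^ g i / (g i)!) (exp (∑ i, x i)) ∧
      Summable fun g : ι → ℕ => ‖∏ i, x i ^ g i / (g i)!‖ := by
  rw [exp_sum]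
  refine hasSum_prod_pi_and_summable_norm (f := fun i k => x i ^ k / (k ! : ℂ))
    (fun i => ?_) fun i => ?_
  · rw [exp_eq_exp_ℂ]
    exact NormedSpace.expSeries_div_hasSum_exp (x i)
  · exact NormedSpace.norm_expSeries_div_summable (x i)

section UpperPair

abbrev UpperPair (ι : Type*) [LinearOrder ι] := {p : ι × ι // p.1 ≤ p.2}

variable {ι M : Type*} [Fintype ι] [LinearOrder ι] [CommMonoid M]

@[to_additive]
theorem prod_upperPair (f : ι → ι → M) :
    ∏ p : UpperPair ι, f p.1.1 p.1.2 = ∏ i, ∏ j, if i ≤ j then f i j else 1 := by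
  rw [← Finset.prod_subtype (Finset.univ.filter fun p : ι × ι => p.1 ≤ p.2) (by simp)
    fun p => f p.1 p.2, Finset.prod_filter, Fintype.prod_prod_type]

@[to_additive]
theorem prod_upperPair_ite_eq (f : ι → ι → M) :
    ∏ p : UpperPair ι, (if p.1.1 = p.1.2 then f p.1.1 p.1.2 else 1) = ∏ i, f i i := by
  rw [prod_upperPair fun i j => if i = j then f i j else 1]
  refine Finset.prod_congr rfl fun i _ => ?_
  calc (∏ j, if i ≤ j then if i = j then f i j else 1 else 1)
      = ∏ j, if i = j then f i j else 1 :=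
        Finset.prod_congr rfl fun j _ => by rcases eq_or_ne i j with rfl | h <;> simp [*]
    _ = f i i := by simp

@[to_additive]
theorem prod_upperPair_mul_swap (f : ι → ι → M) :
    ∏ p : UpperPair ι, f p.1.1 p.1.2 * f p.1.2 p.1.1 = (∏ i, ∏ j, f i j) * ∏ i, f i i := by
  have split (i j : ι) : (if i ≤ j then f i j else 1) * (if j ≤ i then f i j else 1) =
      f i j * if i = j then f i j else 1 := by
    rcases lt_trichotomy i j with h | rfl | h
    · simp [h.le, h.not_ge, h.ne]
    · simp
    · simp [h.le, h.not_ge, h.ne']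
  rw [Finset.prod_mul_distrib, prod_upperPair, prod_upperPair fun i j => f j i,
    Finset.prod_comm (f := fun i j => if i ≤ j then f j i else 1), ← Finset.prod_mul_distrib]
  simp_rw [← Finset.prod_mul_distrib, split, Finset.prod_mul_distrib, Finset.prod_ite_eq]
  simp

end UpperPair

section SymmOfUpper

variable {ι α : Type*} [LinearOrder ι]

def symmOfUpper (b : UpperPair ι → α) : Matrix ι ι α :=
  Matrix.of fun i j => b ⟨(min i j, max i j), min_le_max⟩

theorem symmOfUpper_apply_upperPair (b : UpperPair ι → α) (p : UpperPair ι) :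
    symmOfUpper b p.1.1 p.1.2 = b p := by
  simp [symmOfUpper, p.2]

theorem symmOfUpper_isSymm (b : UpperPair ι → α) : (symmOfUpper b).IsSymm :=
  Matrix.IsSymm.ext fun i j => by simp [symmOfUpper, min_comm, max_comm]

theorem symmOfUpper_injective : Function.Injective (symmOfUpper : (UpperPair ι → α) → _) :=
  fun b b' h => funext fun p => by
    rw [← symmOfUpper_apply_upperPair b, h, symmOfUpper_apply_upperPair]

theorem symmOfUpper_upper {a : Matrix ι ι α} (ha : a.IsSymm) :
    symmOfUpper (fun p : UpperPair ι => a p.1.1 p.1.2) = a := by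
  ext i j
  rcases le_total i j with h | h
  · simp [symmOfUpper, h]
  · simp [symmOfUpper, h, ha.apply i j]

end SymmOfUpper

theorem sum_upperPair_eq_half_vecMul_dotProduct {ι K : Type*} [Fintype ι] [LinearOrder ι]
    [Field K] [NeZero (2 : K)] (U : ι → K) {W : Matrix ι ι K} (hW : W.IsSymm) :
    ∑ p : UpperPair ι, (if p.1.1 = p.1.2 then 1 / 2 else 1) * W p.1.1 p.1.2 * (U p.1.1 * U p.1.2)
      = 1 / 2 * ((U ᵥ* W) ⬝ᵥ U) := by
  set g : ι → ι → K := fun i j => W i j * (U i * U j)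
  have hpoint (p : UpperPair ι) :
      (if p.1.1 = p.1.2 then 1 / 2 else 1) * W p.1.1 p.1.2 * (U p.1.1 * U p.1.2) =
        1 / 2 * (g p.1.1 p.1.2 + g p.1.2 p.1.1) -
          1 / 2 * if p.1.1 = p.1.2 then g p.1.1 p.1.2 else 0 := by
    simp only [g, hW.apply p.1.1 p.1.2]
    split_ifs <;> field_simp <;> ring
  have hquad : (U ᵥ* W) ⬝ᵥ U = ∑ i, ∑ j, g i j := by
    simp only [dotProduct, vecMul, Finset.sum_mul, g]
    rw [Finset.sum_comm]
    exact Finset.sum_congr rfl fun i _ => Finset.sum_congr rfl fun j _ => by ring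
  simp_rw [hpoint, Finset.sum_sub_distrib, ← Finset.mul_sum, sum_upperPair_add_swap,
    sum_upperPair_ite_eq, hquad]
  ring

section Coefficients

variable {n : ℕ}

theorem aFact_eq_prod_upperPair (a : Matrix (Fin n) (Fin n) ℕ) :
    aFact a = ∏ p : UpperPair (Fin n), (a p.1.1 p.1.2)! :=
  (prod_upperPair fun i j => (a i j)!).symm

theorem mPow_eq_prod_upperPair (W : Matrix (Fin n) (Fin n) ℂ) (a : Matrix (Fin n) (Fin n) ℕ) :
    mPow W a = ∏ p : UpperPair (Fin n), W p.1.1 p.1.2 ^ a p.1.1 p.1.2 :=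
  (prod_upperPair fun i j => W i j ^ a i j).symm

theorem pow_hatV_eq_prod_upperPair {M : Type*} [CommMonoid M] (c : M)
    (a : Matrix (Fin n) (Fin n) ℕ) :
    c ^ hatV a = ∏ p : UpperPair (Fin n), (if p.1.1 = p.1.2 then c else 1) ^ a p.1.1 p.1.2 := by
  simp_rw [ite_pow, one_pow]
  rw [prod_upperPair_ite_eq fun i j => c ^ a i j, Finset.prod_pow_eq_pow_sum, hatV]

theorem vPow_tildeV_eq_prod_upperPair (U : Fin n → ℂ)
    {a : Matrix (Fin n) (Fin n) ℕ} (ha : a.IsSymm) :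
    vPow U (tildeV a) = ∏ p : UpperPair (Fin n), (U p.1.1 * U p.1.2) ^ a p.1.1 p.1.2 := by
  simp_rw [mul_pow]
  conv_rhs => enter [2, p, 2]; rw [ha.apply]
  rw [prod_upperPair_mul_swap fun i j => U i ^ a i j]
  simp_rw [vPow, tildeV, pow_add, Finset.prod_mul_distrib, Finset.prod_pow_eq_pow_sum, mul_comm]
  exact congrArg _ (Finset.prod_congr rfl fun k _ => by simp_rw [ha.apply k])

end Coefficients

section Expansion

variable {n : ℕ}

noncomputable def ppolyTerm (s : Fin n → ℕ) (Z : Fin n → ℂ) (W : Matrix (Fin n) (Fin n) ℂ)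
    (a : Matrix (Fin n) (Fin n) ℕ) : ℂ :=
  if a.IsSymm ∧ ∀ k, tildeV a k ≤ s k then
    (vFact s : ℂ) /
        ((2 ^ hatV a : ℂ) * (aFact a : ℂ) * (vFact (fun k => s k - tildeV a k) : ℂ))
      * vPow Z (fun k => s k - tildeV a k) * mPow W a
  else 0

theorem Ppoly_eq_tsum_ppolyTerm (s : Fin n → ℕ) (Z : Fin n → ℂ) (W : Matrix (Fin n) (Fin n) ℂ) :
    Ppoly s Z W = ∑' a, ppolyTerm s Z W a :=
  rfl

variable (U Z : Fin n → ℂ) (W : Matrix (Fin n) (Fin n) ℂ)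

noncomputable def seriesTerm (q : (Fin n → ℕ) × Matrix (Fin n) (Fin n) ℕ) : ℂ :=
  vPow U q.1 / vFact q.1 * ppolyTerm q.1 Z W q.2

noncomputable def expArg : Fin n ⊕ UpperPair (Fin n) → ℂ :=
  Sum.elim (fun i => U i * Z i) fun p =>
    (if p.1.1 = p.1.2 then 1 / 2 else 1) * W p.1.1 p.1.2 * (U p.1.1 * U p.1.2)

theorem sum_expArg {W : Matrix (Fin n) (Fin n) ℂ} (hW : W.IsSymm) :
    ∑ x, expArg U Z W x = U ⬝ᵥ Z + 1 / 2 * ((U ᵥ* W) ⬝ᵥ U) := by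
  rw [Fintype.sum_sum_type, ← sum_upperPair_eq_half_vecMul_dotProduct U hW]
  rfl

def degreeEmbed (g : Fin n ⊕ UpperPair (Fin n) → ℕ) :
    (Fin n → ℕ) × Matrix (Fin n) (Fin n) ℕ :=
  (g ∘ Sum.inl + tildeV (symmOfUpper (g ∘ Sum.inr)), symmOfUpper (g ∘ Sum.inr))

theorem degreeEmbed_injective : Function.Injective (degreeEmbed (n := n)) := by
  intro g g' h
  simp only [degreeEmbed, Prod.mk.injEq] at h
  obtain ⟨hl, hr⟩ := h
  rw [hr] at hl
  have hinl := add_right_cancel hl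
  have hinr := symmOfUpper_injective hr
  funext x
  cases x with
  | inl i => exact congrFun hinl i
  | inr p => exact congrFun hinr p

theorem seriesTerm_eq_zero_of_notMem_range (q : (Fin n → ℕ) × Matrix (Fin n) (Fin n) ℕ)
    (hq : q ∉ Set.range degreeEmbed) : seriesTerm U Z W q = 0 := by
  obtain ⟨s, a⟩ := q
  rw [seriesTerm, ppolyTerm, if_neg, mul_zero]
  rintro ⟨ha, hle⟩
  refine hq ⟨Sum.elim (fun k => s k - tildeV a k) fun p => a p.1.1 p.1.2, ?_⟩
  simp only [degreeEmbed, Function.comp_def, Sum.elim_inl, Sum.elim_inr, symmOfUpper_upper ha]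
  exact Prod.ext (funext fun k => Nat.sub_add_cancel (hle k)) rfl

theorem vFact_ne_zero {R : Type*} [AddMonoidWithOne R] [CharZero R] (r : Fin n → ℕ) :
    (vFact r : R) ≠ 0 :=
  Nat.cast_ne_zero.2 (Finset.prod_ne_zero_iff.2 fun _ _ => Nat.factorial_ne_zero _)

theorem aFact_ne_zero {R : Type*} [AddMonoidWithOne R] [CharZero R]
    (a : Matrix (Fin n) (Fin n) ℕ) : (aFact a : R) ≠ 0 := by
  rw [aFact_eq_prod_upperPair]
  exact Nat.cast_ne_zero.2 (Finset.prod_ne_zero_iff.2 fun _ _ => Nat.factorial_ne_zero _)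

theorem vPow_add (r r' : Fin n → ℕ) : vPow U (r + r') = vPow U r * vPow U r' := by
  simp [vPow, pow_add, Finset.prod_mul_distrib]

theorem seriesTerm_add_tildeV (r : Fin n → ℕ) {a : Matrix (Fin n) (Fin n) ℕ} (ha : a.IsSymm) :
    seriesTerm U Z W (r + tildeV a, a) =
      vPow U r * vPow Z r / vFact r * (mPow W a * vPow U (tildeV a) / (2 ^ hatV a * aFact a)) := by
  have hsub : (fun k => (r + tildeV a) k - tildeV a k) = r :=
    funext fun k => Nat.add_sub_cancel _ _
  rw [seriesTerm, ppolyTerm, if_pos ⟨ha, fun k => Nat.le_add_left _ _⟩, hsub, vPow_add]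
  have := vFact_ne_zero (R := ℂ) (r + tildeV a)
  have := vFact_ne_zero (R := ℂ) r
  have := aFact_ne_zero (R := ℂ) a
  field_simp

theorem seriesTerm_degreeEmbed (g : Fin n ⊕ UpperPair (Fin n) → ℕ) :
    seriesTerm U Z W (degreeEmbed g) = ∏ x, expArg U Z W x ^ g x / (g x)! := by
  obtain ⟨r, b, rfl⟩ : ∃ r b, g = Sum.elim r b := ⟨_, _, (Sum.elim_comp_inl_inr g).symm⟩
  have hb (p : UpperPair (Fin n)) : b p = symmOfUpper b p.1.1 p.1.2 :=
    (symmOfUpper_apply_upperPair b p).symm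
  rw [Fintype.prod_sum_type, degreeEmbed, Sum.elim_comp_inl, Sum.elim_comp_inr,
    seriesTerm_add_tildeV U Z W r (symmOfUpper_isSymm b)]
  simp only [expArg, Sum.elim_inl, Sum.elim_inr]
  congr 1
  · simp [vPow, vFact, mul_pow, Finset.prod_mul_distrib, Finset.prod_div_distrib]
  · rw [vPow_tildeV_eq_prod_upperPair U (symmOfUpper_isSymm b), aFact_eq_prod_upperPair,
      mPow_eq_prod_upperPair]
    simp_rw [hb, mul_pow, Finset.prod_div_distrib, Finset.prod_mul_distrib]
    rw [← pow_hatV_eq_prod_upperPair]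
    push_cast
    rw [_root_.one_div_pow]
    ring

end Expansion

/-- `exp(U ᵗZ + ½ U W ᵗU) = ∑_{s∈ℕⁿ} (U^s/s!) P_s(Z,W)`, with absolute convergence. -/
theorem stmt10 (n : ℕ) (U Z : Fin n → ℂ) (W : Matrix (Fin n) (Fin n) ℂ)
    (hW : W.IsSymm) :
    HasSum (fun s : Fin n → ℕ => vPow U s / (vFact s : ℂ) * Ppoly s Z W)
        (Complex.exp (U ⬝ᵥ Z + (1 / 2 : ℂ) * ((U ᵥ* W) ⬝ᵥ U)))
    ∧ Summable (fun s : Fin n → ℕ => ‖vPow U s / (vFact s : ℂ) * Ppoly s Z W‖) := by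
  obtain ⟨hsum, hnorm⟩ := Complex.hasSum_prod_pow_div_factorial (expArg U Z W)
  simp_rw [← seriesTerm_degreeEmbed, sum_expArg U Z hW] at hsum hnorm
  have hzero := seriesTerm_eq_zero_of_notMem_range U Z W
  have hG := (degreeEmbed_injective.hasSum_iff hzero).1 hsum
  have hGnorm : Summable fun q => ‖seriesTerm U Z W q‖ :=
    (degreeEmbed_injective.summable_iff fun q hq => by simp [hzero q hq]).1 hnorm
  have hfiber (s : Fin n → ℕ) :
      HasSum (fun a => seriesTerm U Z W (s, a)) (vPow U s / vFact s * Ppoly s Z W) := by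
    rw [Ppoly_eq_tsum_ppolyTerm, ← tsum_mul_left]
    exact (hG.summable.prod_factor s).hasSum
  refine ⟨hG.prod_fiberwise hfiber,
    hGnorm.prod.of_nonneg_of_le (fun _ => norm_nonneg _) fun s => ?_⟩
  rw [← (hfiber s).tsum_eq]
  exact norm_tsum_le_tsum_norm (hGnorm.prod_factor s)
end

section
/- For every W ∈ 𝔇_n, ∫_{ℂⁿ} exp(−conj(Z)·ᵗZ − ½·(Z·conj(W)·ᵗZ + conj(Z)·W·ᵗconj(Z))) ∏_{i=1}^n d(Re Z_i)·d(Im Z_i) = πⁿ·det(I_n − W·conj(W))^{-1/2}, where the square root is the positive square root of the positive real number det(I_n − W·conj(W)). -/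
/-!
The two conjugate terms combine, so the integrand is `exp (-q Z)` for the real quadratic form
`q Z = ‖Z‖² + Re (Z W̄ ᵗZ)`. In the coordinates `(Re Z, Im Z) ∈ ℝ²ⁿ` its matrix is
`M = I + [[Re W, Im W], [Im W, -Re W]]`. On the Siegel disk `M` is positive definite, and
conjugating by `[[1, 1], [i, -i]]` shows `det M = det (I - W W̄)`. The real Gaussian integral
`∫_{ℝ²ⁿ} exp (-ᵗx M x) dx = πⁿ / √(det M)` then gives the result.
-/

open Matrix MeasureTheory
open scoped ComplexOrder Real

theorem integral_exp_neg_dotProduct_self {ι : Type*} [Fintype ι] :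
    ∫ y : ι → ℝ, Real.exp (-(y ⬝ᵥ y)) = √π ^ Fintype.card ι := by
  have hprod (y : ι → ℝ) : Real.exp (-(y ⬝ᵥ y)) = ∏ i, Real.exp (-1 * y i ^ 2) := by
    rw [← Real.exp_sum]
    simp [dotProduct, sq]
  simp_rw [hprod]
  rw [integral_fintype_prod_volume_eq_pow (fun t : ℝ => Real.exp (-1 * t ^ 2)), integral_gaussian,
    div_one]

open scoped MatrixOrder in
theorem integral_exp_neg_dotProduct_mulVec {ι : Type*} [Fintype ι] [DecidableEq ι]
    {M : Matrix ι ι ℝ} (hM : M.PosDef) :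
    ∫ x : ι → ℝ, Real.exp (-(x ⬝ᵥ M *ᵥ x)) = √π ^ Fintype.card ι / √M.det := by
  set S := CFC.sqrt M
  have hSS : S * S = M := CFC.sqrt_mul_sqrt_self M hM.posSemidef.nonneg
  have hST : Sᵀ = S := by
    simpa [IsHermitian] using (CFC.sqrt_nonneg M).posSemidef.isHermitian
  have hSdet : S.det = √M.det := by simpa using hM.posSemidef.det_sqrt
  have hSdet_ne : S.det ≠ 0 := hSdet ▸ (Real.sqrt_pos.2 hM.det_pos).ne'
  have hquad (x : ι → ℝ) : x ⬝ᵥ M *ᵥ x = toLin' S x ⬝ᵥ toLin' S x := by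
    rw [toLin'_apply, ← hSS, ← mulVec_mulVec, dotProduct_mulVec, ← mulVec_transpose, hST]
  calc ∫ x : ι → ℝ, Real.exp (-(x ⬝ᵥ M *ᵥ x))
      = ∫ y, Real.exp (-(y ⬝ᵥ y)) ∂(Measure.map (toLin' S) volume) := by
        simp_rw [hquad]
        rw [integral_map (toLin' S).continuous_of_finiteDimensional.aemeasurable
          (by fun_prop : Continuous fun y : ι → ℝ => Real.exp (-(y ⬝ᵥ y))).aestronglyMeasurable]
    _ = |S.det⁻¹| * √π ^ Fintype.card ι := by
        rw [Real.map_matrix_volume_pi_eq_smul_volume_pi hSdet_ne, integral_smul_measure,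
          ENNReal.toReal_ofReal (abs_nonneg _), smul_eq_mul, integral_exp_neg_dotProduct_self]
    _ = √π ^ Fintype.card ι / √M.det := by
        rw [hSdet, abs_inv, abs_of_nonneg (Real.sqrt_nonneg _), inv_mul_eq_div]

open Complex in
/-- Conjugating by `V = [[1, 1], [i, -i]]` brings the block matrix to `[[1, A - iB], [A + iB, 1]]`,
whose determinant is a Schur complement. -/
theorem det_one_add_fromBlocks {ι : Type*} [Fintype ι] [DecidableEq ι] (A B : Matrix ι ι ℂ) :
    (1 + fromBlocks A B B (-A)).det = (1 - (A + I • B) * (A - I • B)).det := by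
  set V : Matrix (ι ⊕ ι) (ι ⊕ ι) ℂ := fromBlocks 1 1 (I • 1) (-I • 1)
  set N : Matrix (ι ⊕ ι) (ι ⊕ ι) ℂ := fromBlocks 1 (A - I • B) (A + I • B) 1
  have hdetV : V.det = (-2 * I) ^ Fintype.card ι := by
    rw [det_fromBlocks_one₁₁, Matrix.mul_one, ← sub_smul, det_smul, det_one, mul_one]
    ring_nf
  have hdetV_ne : V.det ≠ 0 := hdetV ▸ pow_ne_zero _ (by simp)
  have hconj : (1 + fromBlocks A B B (-A)) * V = V * N := by
    rw [← fromBlocks_one, fromBlocks_add, fromBlocks_multiply, fromBlocks_multiply]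
    congr 1 <;> simp only [Matrix.mul_one, Matrix.one_mul, Matrix.mul_smul, Matrix.smul_mul,
      Matrix.mul_add, smul_add, smul_sub, smul_smul, I_mul_I] <;>
      match_scalars <;> simp
  have h := congrArg det hconj
  rw [det_mul, det_mul, mul_comm] at h
  rw [mul_left_cancel₀ hdetV_ne h, det_fromBlocks_one₁₁]

noncomputable def sumPiEquivPiComplex (ι : Type*) : ((ι ⊕ ι) → ℝ) ≃ᵐ (ι → ℂ) :=
  (MeasurableEquiv.sumPiEquivProdPi fun _ => ℝ).trans <|
    (MeasurableEquiv.arrowProdEquivProdArrow ℝ ℝ ι).symm.trans <|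
      MeasurableEquiv.piCongrRight fun _ => Complex.measurableEquivRealProd.symm

@[simp]
theorem sumPiEquivPiComplex_apply {ι : Type*} (x : (ι ⊕ ι) → ℝ) (i : ι) :
    sumPiEquivPiComplex ι x i = ⟨x (.inl i), x (.inr i)⟩ :=
  rfl

theorem measurePreserving_sumPiEquivPiComplex {ι : Type*} [Fintype ι] :
    MeasurePreserving (sumPiEquivPiComplex ι) :=
  (volume_preserving_pi fun _ => Complex.volume_preserving_equiv_real_prod.symm).comp <|
    (volume_measurePreserving_arrowProdEquivProdArrow ℝ ℝ ι).symm.comp <|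
      volume_measurePreserving_sumPiEquivProdPi _

section SiegelForm

variable {ι : Type*} [Fintype ι]

def siegelForm (W : Matrix ι ι ℂ) (Z : ι → ℂ) : ℝ :=
  (star Z ⬝ᵥ Z).re + ((Z ᵥ* W.map (starRingEnd ℂ)) ⬝ᵥ Z).re

theorem star_vecMul_dotProduct_star (W : Matrix ι ι ℂ) (Z : ι → ℂ) :
    (star Z ᵥ* W) ⬝ᵥ star Z = starRingEnd ℂ ((Z ᵥ* W.map (starRingEnd ℂ)) ⬝ᵥ Z) := by
  simp [dotProduct, vecMul, Finset.sum_mul]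

theorem im_star_dotProduct_self (Z : ι → ℂ) : (star Z ⬝ᵥ Z).im = 0 := by
  simp [dotProduct, Complex.im_sum, mul_comm]

theorem neg_dotProduct_sub_half_eq_neg_siegelForm (W : Matrix ι ι ℂ) (Z : ι → ℂ) :
    -(star Z ⬝ᵥ Z) - (1 / 2 : ℂ) * ((Z ᵥ* W.map (starRingEnd ℂ)) ⬝ᵥ Z + (star Z ᵥ* W) ⬝ᵥ star Z)
      = -(siegelForm W Z : ℂ) := by
  rw [star_vecMul_dotProduct_star, Complex.add_conj]
  apply Complex.ext <;> simp [siegelForm, im_star_dotProduct_self]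
  ring

def siegelRealMatrix [DecidableEq ι] (W : Matrix ι ι ℂ) : Matrix (ι ⊕ ι) (ι ⊕ ι) ℝ :=
  1 + fromBlocks (W.map Complex.re) (W.map Complex.im) (W.map Complex.im) (-W.map Complex.re)

theorem re_star_dotProduct_self_sumPiEquivPiComplex (x : (ι ⊕ ι) → ℝ) :
    (star (sumPiEquivPiComplex ι x) ⬝ᵥ sumPiEquivPiComplex ι x).re = x ⬝ᵥ x := by
  simp [dotProduct, Complex.re_sum, Fintype.sum_sum_type, Finset.sum_add_distrib]

theorem re_vecMul_dotProduct_sumPiEquivPiComplex (W : Matrix ι ι ℂ) (x : (ι ⊕ ι) → ℝ) :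
    ((sumPiEquivPiComplex ι x ᵥ* W.map (starRingEnd ℂ)) ⬝ᵥ sumPiEquivPiComplex ι x).re
      = x ⬝ᵥ fromBlocks (W.map Complex.re) (W.map Complex.im) (W.map Complex.im)
          (-W.map Complex.re) *ᵥ x := by
  simp only [dotProduct, vecMul, mulVec, Fintype.sum_sum_type, Complex.re_sum, Finset.sum_mul,
    Finset.mul_sum, ← Finset.sum_add_distrib]
  rw [Finset.sum_comm]
  refine Finset.sum_congr rfl fun i _ => Finset.sum_congr rfl fun j _ => ?_
  simp
  ring

theorem siegelForm_sumPiEquivPiComplex [DecidableEq ι] (W : Matrix ι ι ℂ) (x : (ι ⊕ ι) → ℝ) :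
    siegelForm W (sumPiEquivPiComplex ι x) = x ⬝ᵥ siegelRealMatrix W *ᵥ x := by
  rw [siegelForm, siegelRealMatrix, add_mulVec, one_mulVec, dotProduct_add,
    re_star_dotProduct_self_sumPiEquivPiComplex, re_vecMul_dotProduct_sumPiEquivPiComplex]

theorem det_siegelRealMatrix [DecidableEq ι] (W : Matrix ι ι ℂ) :
    ((siegelRealMatrix W).det : ℂ) = (1 - W * W.map (starRingEnd ℂ)).det := by
  set A : Matrix ι ι ℂ := (W.map Complex.re).map Complex.ofRealHom
  set B : Matrix ι ι ℂ := (W.map Complex.im).map Complex.ofRealHom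
  have hW : A + Complex.I • B = W := by ext; simp [A, B, Complex.ext_iff]
  have hW' : A - Complex.I • B = W.map (starRingEnd ℂ) := by ext; simp [A, B, Complex.ext_iff]
  calc ((siegelRealMatrix W).det : ℂ) = (1 + fromBlocks A B B (-A)).det := by
        rw [← Complex.ofRealHom_eq_coe, RingHom.map_det, RingHom.mapMatrix_apply, siegelRealMatrix,
          Matrix.map_add _ (map_add _), Matrix.map_one _ (map_zero _) (map_one _), fromBlocks_map,
          Matrix.map_neg _ (map_neg _)]
    _ = (1 - W * W.map (starRingEnd ℂ)).det := by rw [det_one_add_fromBlocks, hW, hW']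

theorem siegelForm_pos [DecidableEq ι] {W : Matrix ι ι ℂ} (hW : W.IsSymm)
    (hpos : (1 - W * W.map (starRingEnd ℂ)).PosDef) {Z : ι → ℂ} (hZ : Z ≠ 0) :
    0 < siegelForm W Z := by
  -- With `w = W Z̄`: `2 siegelForm W Z = ‖Z + w‖² + (‖Z‖² - ‖w‖²)`, and `‖w‖ < ‖Z‖` is `hpos`.
  set w := W *ᵥ star Z
  have hconj : W.map (starRingEnd ℂ) *ᵥ Z = star w := by
    ext i; simp [w, mulVec, dotProduct]
  have hform : siegelForm W Z = (star Z ⬝ᵥ Z).re + (star w ⬝ᵥ Z).re := by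
    rw [siegelForm, ← hconj, ← vecMul_transpose, ← transpose_map, hW.eq]
  have hnorm : (star Z ⬝ᵥ (W * W.map (starRingEnd ℂ)) *ᵥ Z) = star w ⬝ᵥ w := by
    rw [← mulVec_mulVec, hconj, dotProduct_mulVec, ← mulVec_transpose, hW.eq, dotProduct_comm]
  have hlt : (star w ⬝ᵥ w).re < (star Z ⬝ᵥ Z).re := by
    simpa [sub_mulVec, hnorm] using hpos.re_dotProduct_pos hZ
  have hsq : 0 ≤ (star (Z + w) ⬝ᵥ (Z + w)).re := by
    simpa using (Complex.nonneg_iff.1 (dotProduct_star_self_nonneg (Z + w))).1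
  have hcross : (star Z ⬝ᵥ w).re = (star w ⬝ᵥ Z).re := by
    rw [star_dotProduct, Complex.star_def, Complex.conj_re]
  simp only [star_add, add_dotProduct, dotProduct_add, Complex.add_re] at hsq
  linarith

theorem siegelRealMatrix_posDef [DecidableEq ι] {W : Matrix ι ι ℂ}
    (hW : W.IsSymm) (hpos : (1 - W * W.map (starRingEnd ℂ)).PosDef) :
    (siegelRealMatrix W).PosDef := by
  refine .of_dotProduct_mulVec_pos ?_ fun x hx => ?_
  · rw [IsHermitian, conjTranspose_eq_transpose_of_trivial, siegelRealMatrix, transpose_add,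
      transpose_one, fromBlocks_transpose, transpose_neg, ← transpose_map, ← transpose_map, hW.eq]
  · have hZ : sumPiEquivPiComplex ι x ≠ 0 := by
      have h0 : sumPiEquivPiComplex ι 0 = 0 := funext fun _ => Complex.ext rfl rfl
      exact h0 ▸ (sumPiEquivPiComplex ι).injective.ne hx
    rw [star_trivial, ← siegelForm_sumPiEquivPiComplex]
    exact siegelForm_pos hW hpos hZ

theorem integral_exp_neg_siegelForm [DecidableEq ι] {W : Matrix ι ι ℂ}
    (hW : W.IsSymm) (hpos : (1 - W * W.map (starRingEnd ℂ)).PosDef) :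
    ∫ Z : ι → ℂ, Real.exp (-siegelForm W Z)
      = π ^ Fintype.card ι / √(1 - W * W.map (starRingEnd ℂ)).det.re := by
  rw [← measurePreserving_sumPiEquivPiComplex.integral_comp']
  simp_rw [siegelForm_sumPiEquivPiComplex]
  rw [integral_exp_neg_dotProduct_mulVec (siegelRealMatrix_posDef hW hpos), ← det_siegelRealMatrix,
    Complex.ofReal_re, Fintype.card_sum, pow_add, ← mul_pow, Real.mul_self_sqrt Real.pi_nonneg]

end SiegelForm

/-- The Gaussian integral
`∫_{ℂⁿ} exp(−conj Z ᵗZ − ½(Z conj W ᵗZ + conj Z W ᵗconj Z)) ∏ dRe Z_i dIm Z_i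
  = πⁿ det(I − W conj W)^{-1/2}`,
the square root being the positive square root of the positive real
`det(I − W conj W)`. -/
theorem stmt11 (n : ℕ) (W : Matrix (Fin n) (Fin n) ℂ) (hW : W ∈ SiegelDisk n) :
    ∫ Z : Fin n → ℂ,
        Complex.exp (-(star Z ⬝ᵥ Z)
          - (1 / 2 : ℂ) * ((Z ᵥ* cm W) ⬝ᵥ Z + (star Z ᵥ* W) ⬝ᵥ star Z))
      = (π : ℂ) ^ n / (Real.sqrt ((1 - W * cm W).det.re) : ℂ) := by
  obtain ⟨hsymm, hpos⟩ := hW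
  simp only [cm] at hpos ⊢
  simp_rw [neg_dotProduct_sub_half_eq_neg_siegelForm, ← Complex.ofReal_neg, ← Complex.ofReal_exp]
  rw [integral_complex_ofReal, integral_exp_neg_siegelForm hsymm hpos, Fintype.card_fin]
  norm_cast
end

section
/- Let m > 0. For every s ∈ ℕⁿ, the polynomial f_s(W,z) = (s!)^{-1/2}·P_s(√(8πm)·z, W), viewed as a holomorphic function of (W,z) ∈ 𝔇_n × ℂⁿ (with independent coordinates W_{jk}, 1 ≤ j ≤ k ≤ n, of the symmetric matrix W), satisfies the system of differential equations ∂²f_s/∂z_j∂z_k = 8πm·(1 + δ_{jk})·∂f_s/∂W_{jk} for all 1 ≤ j ≤ k ≤ n. -/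
open Matrix
open scoped ComplexOrder Real Nat

/-- `f_s(W,z) = (s!)^{-1/2} P_s(√(8πm) z, W)`. -/
noncomputable def fPoly {n : ℕ} (m : ℝ) (s : Fin n → ℕ)
    (W : Matrix (Fin n) (Fin n) ℂ) (z : Fin n → ℂ) : ℂ :=
  ((Real.sqrt (vFact s) : ℂ))⁻¹ *
    Ppoly s (fun i => (Real.sqrt (8 * π * m) : ℂ) * z i) W

/-- Holomorphic partial derivative in the `j`-th coordinate of `ℂⁿ`. -/
noncomputable def pdZ {n : ℕ} (f : (Fin n → ℂ) → ℂ) (j : Fin n) (z : Fin n → ℂ) : ℂ :=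
  deriv (fun t => f (Function.update z j t)) (z j)

/-- Holomorphic partial derivative in the matrix entry `W_{jk}`. -/
noncomputable def pdW {n : ℕ} (f : Matrix (Fin n) (Fin n) ℂ → ℂ) (j k : Fin n)
    (W : Matrix (Fin n) (Fin n) ℂ) : ℂ :=
  deriv (fun t => f (W.updateRow j (Function.update (W j) k t))) (W j k)

/-!
Expanding the exponential, `P_s(Z, W) = ∑_a c_a Z^(s - ṽ(a)) W^a`, a finite sum over the
symmetric `a ∈ ℕ^(n×n)` with `ṽ(a) ≤ s`. Let `E` be the exponent of `W_{jk}`, so that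
`ṽ(E) = e_j + e_k`. Then `∂²/∂Z_j∂Z_k` sends the term of `a` to a multiple of
`Z^(s - ṽ(a + E)) W^a`, and `∂/∂W_{jk}` sends the term of `a + E` to a multiple of the same
monomial. After the shift `a ↦ a + E` the coefficients agree up to the factor `1 + δ_{jk}`, which
comes from `2^(hatV a)` in `c_a`. So `∂²P_s/∂Z_j∂Z_k = (1 + δ_{jk}) ∂P_s/∂W_{jk}`, and the
rescaling `z ↦ √(8πm) z` in `f_s` contributes the factor `8πm`.
-/

theorem Fintype.prod_eq_mul_prod_compl_of_eq {ι M : Type*} [Fintype ι] [DecidableEq ι]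
    [CommMonoid M] {f g : ι → M} (x : ι) (h : ∀ i, i ≠ x → f i = g i) :
    ∏ i, f i = f x * ∏ i ∈ {x}ᶜ, g i := by
  rw [Fintype.prod_eq_mul_prod_compl x]
  congr 1
  exact Finset.prod_congr rfl fun i hi => h i (Finset.mem_compl.1 hi ∘ Finset.mem_singleton.2)

theorem Pi.single_le_iff {ι M : Type*} [DecidableEq ι] [AddMonoid M] [PartialOrder M]
    [CanonicallyOrderedAdd M] {f : ι → M} {i : ι} {x : M} : Pi.single i x ≤ f ↔ x ≤ f i := by
  refine ⟨fun h => by simpa using h i, fun h l => ?_⟩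
  by_cases hl : l = i
  · subst hl
    simpa using h
  · simp [hl]

theorem add_le_iff_le_and_le_tsub {α : Type*} [AddCommMonoid α] [PartialOrder α]
    [CanonicallyOrderedAdd α] [Sub α] [OrderedSub α] [AddLeftReflectLE α] {x y r : α} :
    x + y ≤ r ↔ x ≤ r ∧ y ≤ r - x :=
  ⟨fun h => ⟨le_self_add.trans h, (le_tsub_iff_left (le_self_add.trans h)).2 h⟩,
    fun h => (le_tsub_iff_left h.1).1 h.2⟩

theorem Matrix.nat_add_sub_cancel {m l : Type*} (a b : Matrix m l ℕ) : a + b - b = a :=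
  Matrix.ext fun _ _ => Nat.add_sub_cancel _ _

theorem deriv_tsum_mul_of_support_finite {ι : Type*} {c : ι → ℂ} (hc : c.support.Finite)
    {g : ι → ℂ → ℂ} {g' : ι → ℂ} {x : ℂ} (hg : ∀ a, HasDerivAt (g a) (g' a) x) :
    deriv (fun t => ∑' a, c a * g a t) x = ∑' a, c a * g' a := by
  have hsupp : ∀ h : ι → ℂ, (fun a => c a * h a).support ⊆ hc.toFinset := fun h =>
    (Function.support_mul_subset_left _ _).trans hc.coe_toFinset.superset
  have hsum : (fun t => ∑' a, c a * g a t) = fun t => ∑ a ∈ hc.toFinset, c a * g a t :=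
    funext fun t => tsum_eq_sum' (hsupp _)
  rw [hsum, tsum_eq_sum' (hsupp g')]
  exact (HasDerivAt.fun_sum fun a _ => (hg a).const_mul (c a)).deriv

section Monomials

variable {n : ℕ}

theorem vFact_eq_mul_vFact_sub_single {r : Fin n → ℕ} {k : Fin n} (hk : 0 < r k) :
    vFact r = r k * vFact (r - Pi.single k 1) := by
  have hoff : ∀ i, i ≠ k → (r i)! = ((r - Pi.single k 1 : Fin n → ℕ) i)! := fun i hi => by
    simp [hi]
  rw [vFact, vFact, Fintype.prod_eq_mul_prod_compl_of_eq k hoff,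
    Fintype.prod_eq_mul_prod_compl_of_eq k fun _ _ => rfl, Pi.sub_apply, Pi.single_eq_same,
    ← mul_assoc, Nat.mul_factorial_pred hk.ne']

theorem vFact_pos (r : Fin n → ℕ) : 0 < vFact r :=
  Finset.prod_pos fun _ _ => Nat.factorial_pos _

theorem hasDerivAt_vPow_update (z : Fin n → ℂ) (r : Fin n → ℕ) (k : Fin n) :
    HasDerivAt (fun t => vPow (Function.update z k t) r)
      (r k * vPow z (r - Pi.single k 1)) (z k) := by
  have hupd : ∀ t, vPow (Function.update z k t) r = t ^ r k * ∏ i ∈ {k}ᶜ, z i ^ r i :=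
    fun t => by
      rw [vPow, Fintype.prod_eq_mul_prod_compl_of_eq k fun i hi => by
        rw [Function.update_of_ne hi], Function.update_self]
  have hsub : vPow z (r - Pi.single k 1) = z k ^ (r k - 1) * ∏ i ∈ {k}ᶜ, z i ^ r i := by
    rw [vPow, Fintype.prod_eq_mul_prod_compl_of_eq (g := fun i => z i ^ r i) k fun i hi => by
      simp [hi]]
    simp
  simp only [hupd, hsub]
  exact ((hasDerivAt_pow (r k) (z k)).mul_const _).congr_deriv (by ring)

end Monomials

section SymmetricUnit

variable {n : ℕ}

/-- The exponent of the monomial `W_{jk}` in the coordinates of a symmetric matrix. -/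
def symmUnit (j k : Fin n) : Matrix (Fin n) (Fin n) ℕ :=
  Matrix.of fun i l => if (i = j ∧ l = k) ∨ (i = k ∧ l = j) then 1 else 0

theorem symmUnit_apply (j k i l : Fin n) :
    symmUnit j k i l = if (i = j ∧ l = k) ∨ (i = k ∧ l = j) then 1 else 0 := rfl

theorem symmUnit_apply_self (j k : Fin n) : symmUnit j k j k = 1 := by
  simp [symmUnit_apply]

theorem symmUnit_apply_comm (j k i l : Fin n) : symmUnit j k l i = symmUnit j k i l := by
  simp only [symmUnit_apply]
  congr 1
  simp only [eq_iff_iff]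
  tauto

theorem symmUnit_apply_of_ne {j k i l : Fin n} (hjk : j ≤ k) (hil : i ≤ l)
    (hne : (i, l) ≠ (j, k)) : symmUnit j k i l = 0 := by
  rw [symmUnit_apply, if_neg]
  rintro (⟨rfl, rfl⟩ | ⟨rfl, rfl⟩)
  · exact hne rfl
  · exact hne (by rw [le_antisymm hjk hil])

theorem isSymm_add_symmUnit_iff {a : Matrix (Fin n) (Fin n) ℕ} {j k : Fin n} :
    (a + symmUnit j k).IsSymm ↔ a.IsSymm := by
  simp only [Matrix.IsSymm.ext_iff, Matrix.add_apply, symmUnit_apply_comm]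
  exact forall₂_congr fun i l => add_left_inj _

theorem tsub_symmUnit_add {b : Matrix (Fin n) (Fin n) ℕ} {j k : Fin n} (hb : b.IsSymm)
    (hjk : 0 < b j k) : b - symmUnit j k + symmUnit j k = b := by
  have hkj : b k j = b j k := hb.apply j k
  ext i l
  simp only [Matrix.add_apply, Matrix.sub_apply, symmUnit_apply]
  split_ifs with h
  · rcases h with ⟨rfl, rfl⟩ | ⟨rfl, rfl⟩ <;> omega
  · omega

theorem le_tildeV (a : Matrix (Fin n) (Fin n) ℕ) (i l : Fin n) : a i l ≤ tildeV a l :=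
  (Finset.single_le_sum (f := fun i => a i l) (fun _ _ => Nat.zero_le _)
    (Finset.mem_univ i)).trans
    (Nat.le_add_left _ (a l l))

theorem tildeV_add (a b : Matrix (Fin n) (Fin n) ℕ) : tildeV (a + b) = tildeV a + tildeV b := by
  ext l
  simp only [tildeV, Pi.add_apply, Matrix.add_apply, Finset.sum_add_distrib]
  ring

theorem tildeV_symmUnit (j k : Fin n) :
    tildeV (symmUnit j k) = Pi.single j 1 + Pi.single k 1 := by
  ext l
  by_cases hj : l = j <;> by_cases hk : l = k <;> subst_vars <;>
    simp_all [tildeV, symmUnit_apply, eq_comm]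

theorem hatV_add (a b : Matrix (Fin n) (Fin n) ℕ) : hatV (a + b) = hatV a + hatV b := by
  simp [hatV, Finset.sum_add_distrib]

theorem hatV_symmUnit (j k : Fin n) : hatV (symmUnit j k) = if j = k then 1 else 0 := by
  by_cases h : j = k
  · subst h
    simp [hatV, symmUnit_apply]
  · simp only [hatV, symmUnit_apply, if_neg h]
    exact Finset.sum_eq_zero fun i _ => if_neg (by rintro (⟨rfl, rfl⟩ | ⟨rfl, rfl⟩) <;> simp_all)

end SymmetricUnit

section UpperTriangularProducts

variable {n : ℕ}

theorem prod_upper_eq_mul_prod_compl {M : Type*} [CommMonoid M] {f g : Fin n → Fin n → M}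
    {j k : Fin n} (hjk : j ≤ k) (h : ∀ i l, i ≤ l → (i, l) ≠ (j, k) → f i l = g i l) :
    ∏ i, ∏ l, (if i ≤ l then f i l else 1)
      = f j k * ∏ p ∈ {(j, k)}ᶜ, if p.1 ≤ p.2 then g p.1 p.2 else 1 := by
  rw [← Fintype.prod_prod_type' fun i l => if i ≤ l then f i l else 1,
    Fintype.prod_eq_mul_prod_compl_of_eq (j, k) fun p hp => ?_, if_pos hjk]
  split_ifs with hle
  · exact h p.1 p.2 hle hp
  · rfl

theorem aFact_pos (a : Matrix (Fin n) (Fin n) ℕ) : 0 < aFact a :=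
  Finset.prod_pos fun _ _ => Finset.prod_pos fun _ _ => by split_ifs <;> positivity

theorem aFact_add_symmUnit (a : Matrix (Fin n) (Fin n) ℕ) {j k : Fin n} (hjk : j ≤ k) :
    aFact (a + symmUnit j k) = (a j k + 1) * aFact a := by
  have hoff : ∀ i l, i ≤ l → (i, l) ≠ (j, k) → ((a + symmUnit j k) i l)! = (a i l)! :=
    fun i l hil hne => by rw [Matrix.add_apply, symmUnit_apply_of_ne hjk hil hne, add_zero]
  rw [aFact, aFact, prod_upper_eq_mul_prod_compl hjk hoff,
    prod_upper_eq_mul_prod_compl hjk fun _ _ _ _ => rfl, Matrix.add_apply, symmUnit_apply_self,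
    Nat.factorial_succ, mul_assoc]

theorem hasDerivAt_mPow_updateRow (W : Matrix (Fin n) (Fin n) ℂ) (a : Matrix (Fin n) (Fin n) ℕ)
    {j k : Fin n} (hjk : j ≤ k) :
    HasDerivAt (fun t => mPow (W.updateRow j (Function.update (W j) k t)) a)
      (a j k * mPow W (a - symmUnit j k)) (W j k) := by
  set C := ∏ p ∈ {(j, k)}ᶜ, if p.1 ≤ p.2 then W p.1 p.2 ^ a p.1 p.2 else 1
  have hupd : ∀ t, mPow (W.updateRow j (Function.update (W j) k t)) a = t ^ a j k * C := by
    intro t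
    have hoff : ∀ i l, i ≤ l → (i, l) ≠ (j, k) →
        W.updateRow j (Function.update (W j) k t) i l ^ a i l = W i l ^ a i l := by
      intro i l _ hne
      by_cases hi : i = j
      · subst hi
        rw [updateRow_self, Function.update_of_ne fun hl => hne (by rw [hl])]
      · rw [updateRow_ne hi]
    rw [mPow, prod_upper_eq_mul_prod_compl hjk hoff, updateRow_self, Function.update_self]
  have hsub : mPow W (a - symmUnit j k) = W j k ^ (a j k - 1) * C := by
    rw [mPow, prod_upper_eq_mul_prod_compl hjk fun i l hil hne => by
      rw [Matrix.sub_apply, symmUnit_apply_of_ne hjk hil hne, tsub_zero],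
      Matrix.sub_apply, symmUnit_apply_self]
  simp only [hupd, hsub]
  exact ((hasDerivAt_pow (a j k) (W j k)).mul_const C).congr_deriv (by ring)

end UpperTriangularProducts

section PartialDerivatives

variable {n : ℕ}

theorem pdZ_const_mul (c : ℂ) (f : (Fin n → ℂ) → ℂ) (k : Fin n) (z : Fin n → ℂ) :
    pdZ (fun z => c * f z) k z = c * pdZ f k z :=
  deriv_const_mul_field c

theorem pdW_const_mul (c : ℂ) (f : Matrix (Fin n) (Fin n) ℂ → ℂ) (j k : Fin n)
    (W : Matrix (Fin n) (Fin n) ℂ) : pdW (fun W => c * f W) j k W = c * pdW f j k W :=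
  deriv_const_mul_field c

theorem pdZ_comp_const_mul (c : ℂ) (f : (Fin n → ℂ) → ℂ) (k : Fin n) (z : Fin n → ℂ) :
    pdZ (fun z => f fun i => c * z i) k z = c * pdZ f k fun i => c * z i := by
  have hupd : ∀ t, (fun i => c * Function.update z k t i)
      = Function.update (fun i => c * z i) k (c * t) := fun t => by
    ext i
    by_cases hi : i = k
    · subst hi
      simp
    · simp [hi]
  simp only [pdZ, hupd]
  exact deriv_comp_mul_left c (fun u => f (Function.update (fun i => c * z i) k u)) (z k)

theorem pdZ_tsum_mul_vPow {ι : Type*} {c : ι → ℂ} (hc : c.support.Finite)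
    (r : ι → Fin n → ℕ) (k : Fin n) (z : Fin n → ℂ) :
    pdZ (fun z => ∑' a, c a * vPow z (r a)) k z
      = ∑' a, c a * (r a k * vPow z (r a - Pi.single k 1)) :=
  deriv_tsum_mul_of_support_finite hc fun a => hasDerivAt_vPow_update z (r a) k

theorem pdW_tsum_mul_mPow {ι : Type*} {c : ι → ℂ} (hc : c.support.Finite)
    (b : ι → Matrix (Fin n) (Fin n) ℕ) {j k : Fin n} (hjk : j ≤ k)
    (W : Matrix (Fin n) (Fin n) ℂ) :
    pdW (fun W => ∑' a, c a * mPow W (b a)) j k W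
      = ∑' a, c a * (b a j k * mPow W (b a - symmUnit j k)) :=
  deriv_tsum_mul_of_support_finite hc fun a => hasDerivAt_mPow_updateRow W (b a) hjk

end PartialDerivatives

section HeatEquation

variable {n : ℕ}

theorem tildeV_add_symmUnit_le_iff {s : Fin n → ℕ} {a : Matrix (Fin n) (Fin n) ℕ}
    {j k : Fin n} :
    tildeV (a + symmUnit j k) ≤ s ↔
      tildeV a ≤ s ∧ 0 < (s - tildeV a) k ∧ 0 < (s - tildeV a - Pi.single k 1 : Fin n → ℕ) j := by
  rw [tildeV_add, tildeV_symmUnit, add_comm (Pi.single j 1), ← add_assoc,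
    add_le_iff_le_and_le_tsub, add_le_iff_le_and_le_tsub, Pi.single_le_iff, Pi.single_le_iff,
    tsub_tsub, and_assoc]
  rfl

theorem tsub_tildeV_add_symmUnit (s : Fin n → ℕ) (a : Matrix (Fin n) (Fin n) ℕ) (j k : Fin n) :
    s - tildeV (a + symmUnit j k) = s - tildeV a - Pi.single k 1 - Pi.single j 1 := by
  rw [tsub_tsub, tsub_tsub, tildeV_add, tildeV_symmUnit, add_comm (Pi.single j 1 : Fin n → ℕ)]

noncomputable def pCoeff (s : Fin n → ℕ) (a : Matrix (Fin n) (Fin n) ℕ) : ℂ :=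
  if a.IsSymm ∧ ∀ k, tildeV a k ≤ s k then
    (vFact s : ℂ) / ((2 ^ hatV a : ℂ) * (aFact a : ℂ) * (vFact (s - tildeV a) : ℂ))
  else 0

theorem Ppoly_eq_tsum (s : Fin n → ℕ) (Z : Fin n → ℂ) (W : Matrix (Fin n) (Fin n) ℂ) :
    Ppoly s Z W = ∑' a, pCoeff s a * vPow Z (s - tildeV a) * mPow W a := by
  refine tsum_congr fun a => ?_
  by_cases h : a.IsSymm ∧ ∀ k, tildeV a k ≤ s k
  · rw [pCoeff, if_pos h, if_pos h]
    rfl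
  · rw [pCoeff, if_neg h, if_neg h, zero_mul, zero_mul]

theorem pCoeff_support_finite (s : Fin n → ℕ) : (pCoeff s).support.Finite :=
  (Set.finite_Iic (fun _ l => s l : Fin n → Fin n → ℕ)).subset
    fun (a : Matrix (Fin n) (Fin n) ℕ) ha i l => by
    have h : a.IsSymm ∧ ∀ k, tildeV a k ≤ s k := by
      by_contra h
      exact ha (if_neg h)
    exact (le_tildeV a i l).trans (h.2 l)

theorem pCoeff_mul_eq_pCoeff_add_symmUnit (s : Fin n → ℕ) (a : Matrix (Fin n) (Fin n) ℕ)
    {j k : Fin n} (hjk : j ≤ k) :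
    pCoeff s a * ((s - tildeV a) k : ℂ) * ((s - tildeV a - Pi.single k 1 : Fin n → ℕ) j : ℂ)
      = (1 + if j = k then 1 else 0) * ((a + symmUnit j k) j k : ℂ)
          * pCoeff s (a + symmUnit j k) := by
  by_cases h : (a + symmUnit j k).IsSymm ∧ ∀ l, tildeV (a + symmUnit j k) l ≤ s l
  · rw [pCoeff, pCoeff, if_pos h]
    obtain ⟨hsymm, hle⟩ := h
    rw [isSymm_add_symmUnit_iff] at hsymm
    rw [← Pi.le_def, tildeV_add_symmUnit_le_iff] at hle
    obtain ⟨hle, hk, hj⟩ := hle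
    have hvFact : vFact (s - tildeV a) = (s - tildeV a) k *
        ((s - tildeV a - Pi.single k 1 : Fin n → ℕ) j * vFact (s - tildeV (a + symmUnit j k))) := by
      rw [tsub_tildeV_add_symmUnit, ← vFact_eq_mul_vFact_sub_single hj,
        ← vFact_eq_mul_vFact_sub_single hk]
    rw [if_pos ⟨hsymm, hle⟩, hvFact, aFact_add_symmUnit a hjk, hatV_add, hatV_symmUnit,
      Matrix.add_apply, symmUnit_apply_self]
    have hk' : ((s - tildeV a) k : ℂ) ≠ 0 := by exact_mod_cast hk.ne'
    have hj' : ((s - tildeV a - Pi.single k 1 : Fin n → ℕ) j : ℂ) ≠ 0 := by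
      exact_mod_cast hj.ne'
    have hvF := (vFact_pos (s - tildeV (a + symmUnit j k))).ne'
    have haF := (aFact_pos a).ne'
    push_cast
    split_ifs <;> field_simp <;> ring
  · rw [show pCoeff s (a + symmUnit j k) = 0 from if_neg h, mul_zero]
    rw [isSymm_add_symmUnit_iff, ← Pi.le_def, tildeV_add_symmUnit_le_iff] at h
    by_cases ha : a.IsSymm ∧ ∀ l, tildeV a l ≤ s l
    · have h0 : (s - tildeV a) k = 0 ∨ (s - tildeV a - Pi.single k 1 : Fin n → ℕ) j = 0 := by
        by_contra hc
        rw [not_or] at hc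
        exact h ⟨ha.1, ha.2, Nat.pos_of_ne_zero hc.1, Nat.pos_of_ne_zero hc.2⟩
      rcases h0 with h0 | h0 <;> simp [h0]
    · rw [pCoeff, if_neg ha, zero_mul, zero_mul]

theorem pdZ_pdZ_Ppoly (s : Fin n → ℕ) (Z : Fin n → ℂ) (W : Matrix (Fin n) (Fin n) ℂ)
    {j k : Fin n} (hjk : j ≤ k) :
    pdZ (fun Z' => pdZ (fun Z'' => Ppoly s Z'' W) k Z') j Z
      = (1 + if j = k then 1 else 0) * pdW (fun W' => Ppoly s Z W') j k W := by
  have hfin := pCoeff_support_finite s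
  have hZ : ∀ Z', pdZ (fun Z'' => Ppoly s Z'' W) k Z' = ∑' a,
      pCoeff s a * mPow W a * (s - tildeV a) k * vPow Z' (s - tildeV a - Pi.single k 1) := by
    intro Z'
    simp only [Ppoly_eq_tsum, mul_right_comm _ (vPow _ _)]
    rw [pdZ_tsum_mul_vPow (hfin.subset (Function.support_mul_subset_left _ _))]
    simp only [mul_assoc]
  have hrange : Function.support (fun b => pCoeff s b * vPow Z (s - tildeV b)
      * (b j k * mPow W (b - symmUnit j k))) ⊆ Set.range (· + symmUnit j k) := by
    intro b hb
    have hc : pCoeff s b ≠ 0 := left_ne_zero_of_mul (left_ne_zero_of_mul hb)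
    have hb0 : (b j k : ℂ) ≠ 0 := left_ne_zero_of_mul (right_ne_zero_of_mul hb)
    have hsymm : b.IsSymm := by
      by_contra h
      exact hc (if_neg fun h' => h h'.1)
    exact ⟨b - symmUnit j k,
      tsub_symmUnit_add hsymm (Nat.pos_of_ne_zero (by exact_mod_cast hb0))⟩
  simp only [hZ]
  simp only [Ppoly_eq_tsum]
  rw [pdZ_tsum_mul_vPow, pdW_tsum_mul_mPow _ _ hjk,
    ← (add_left_injective (symmUnit j k)).tsum_eq hrange, ← tsum_mul_left]
  · refine tsum_congr fun a => ?_
    rw [Matrix.nat_add_sub_cancel, tsub_tildeV_add_symmUnit]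
    linear_combination (mPow W a * vPow Z (s - tildeV a - Pi.single k 1 - Pi.single j 1))
      * pCoeff_mul_eq_pCoeff_add_symmUnit s a hjk
  · exact hfin.subset (Function.support_mul_subset_left _ _)
  · exact hfin.subset
      ((Function.support_mul_subset_left _ _).trans (Function.support_mul_subset_left _ _))

end HeatEquation

theorem stmt15_general (n : ℕ) (m : ℝ) (hm : 0 < m) (s : Fin n → ℕ)
    (W : Matrix (Fin n) (Fin n) ℂ) (z : Fin n → ℂ)
    (j k : Fin n) (hjk : j ≤ k) :
    pdZ (fun z' => pdZ (fun z'' => fPoly m s W z'') k z') j z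
      = (8 * π * m : ℝ) * (1 + if j = k then 1 else 0) *
        pdW (fun W' => fPoly m s W' z) j k W := by
  have hsqrt : (√(8 * π * m) : ℂ) * √(8 * π * m) = (8 * π * m : ℝ) := by
    rw [← Complex.ofReal_mul, Real.mul_self_sqrt (by positivity)]
  have hinner : ∀ z', pdZ (fun z'' => fPoly m s W z'') k z' = (√(vFact s) : ℂ)⁻¹
      * (√(8 * π * m) * pdZ (fun Z => Ppoly s Z W) k fun i => √(8 * π * m) * z' i) := by
    intro z'
    rw [← pdZ_comp_const_mul, ← pdZ_const_mul]
    rfl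
  simp only [hinner]
  unfold fPoly
  rw [pdZ_const_mul, pdZ_const_mul,
    pdZ_comp_const_mul _ (fun Z => pdZ (fun Z' => Ppoly s Z' W) k Z), pdZ_pdZ_Ppoly s _ W hjk,
    pdW_const_mul, ← hsqrt]
  ring

/-- `∂²f_s/∂z_j∂z_k = 8πm (1 + δ_{jk}) ∂f_s/∂W_{jk}` for `1 ≤ j ≤ k ≤ n`, on `𝔇_n × ℂⁿ`. -/
theorem stmt15 (n : ℕ) (m : ℝ) (hm : 0 < m) (s : Fin n → ℕ)
    (W : Matrix (Fin n) (Fin n) ℂ) (hW : W ∈ SiegelDisk n) (z : Fin n → ℂ)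
    (j k : Fin n) (hjk : j ≤ k) :
    pdZ (fun z' => pdZ (fun z'' => fPoly m s W z'') k z') j z
      = (8 * π * m : ℝ) * (1 + if j = k then 1 else 0) *
        pdW (fun W' => fPoly m s W' z) j k W :=
  stmt15_general n m hm s W z j k hjk
end
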